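/- If X ⊂ K^n is a correct (poised) set for Lagrange interpolation by polynomials of total degree ≤ m (so #X = #I), then there exist unique coefficients a_{α,β} (α ∈ J, β ∈ I) such that every point of X is a solution of the system x^α = Σ_{β∈I} a_{α,β} x^β for all |α| = m+1; consequently the associated multiplication matrices A_1, ..., A_n commute and are diagonalizable. -/

import Mathlib

open Finset Matrix

/-- Total degree of a multi-index. -/
def mdeg {n : ℕ} (α : Fin n → ℕ) : ℕ := ∑ i, α i

/-- The set `I = {α ∈ ℤ₊ⁿ : |α| ≤ m}` of multi-indices of total degree at most `m`. -/
def Idx (n m : ℕ) : Finset (Fin n → ℕ) :=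
  (Fintype.piFinset fun _ => Finset.range (m + 1)).filter fun α => mdeg α ≤ m

/-- `I` is a lower set of multi-indices. -/
def IsLower {n : ℕ} (I : Finset (Fin n → ℕ)) : Prop :=
  ∀ β ∈ I, ∀ γ : Fin n → ℕ, (∀ i, γ i ≤ β i) → γ ∈ I

/-- `α` belongs to the border `J` of the lower set `I`. -/
def InBorder {n : ℕ} (I : Finset (Fin n → ℕ)) (α : Fin n → ℕ) : Prop :=
  α ∉ I ∧ ∃ β ∈ I, ∃ i : Fin n, α = β + Pi.single i 1

/-- The multiplication matrix `A_i`: its row indexed by `β ∈ I` is the standard basis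
vector at `β + e_i` if `β + e_i ∈ I`, and is `(a_{β+e_i,γ})_{γ∈I}` otherwise. -/
def multMat {K : Type*} [Field K] {n : ℕ} (I : Finset (Fin n → ℕ))
    (a : (Fin n → ℕ) → (Fin n → ℕ) → K) (i : Fin n) : Matrix ↥I ↥I K :=
  fun β γ =>
    if (β : Fin n → ℕ) + Pi.single i 1 ∈ I then
      (if (γ : Fin n → ℕ) = (β : Fin n → ℕ) + Pi.single i 1 then 1 else 0)
    else a ((β : Fin n → ℕ) + Pi.single i 1) γ

/-- The monomial vector `v(x) = (x^β)_{β ∈ I}`. -/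
def monVec {K : Type*} [Field K] {n : ℕ} (I : Finset (Fin n → ℕ)) (x : Fin n → K) :
    ↥I → K :=
  fun β => ∏ i, x i ^ (β : Fin n → ℕ) i

/-- `x` is a solution of the system (1): `x^α = Σ_{β∈I} a_{α,β} x^β` for all `|α| = m+1`. -/
def IsSol {K : Type*} [Field K] {n : ℕ} (m : ℕ)
    (a : (Fin n → ℕ) → (Fin n → ℕ) → K) (x : Fin n → K) : Prop :=
  ∀ α : Fin n → ℕ, mdeg α = m + 1 →
    ∏ i, x i ^ α i = ∑ β ∈ Idx n m, a α β * ∏ i, x i ^ β i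

/-- `x` is a solution of the system for a general lower set `I` with border `J`. -/
def IsSolB {K : Type*} [Field K] {n : ℕ} (I : Finset (Fin n → ℕ))
    (a : (Fin n → ℕ) → (Fin n → ℕ) → K) (x : Fin n → K) : Prop :=
  ∀ α : Fin n → ℕ, InBorder I α →
    ∏ i, x i ^ α i = ∑ β ∈ I, a α β * ∏ i, x i ^ β i

/-- A square matrix is diagonalizable (semisimple). -/
def Diagonalizable {K : Type*} [Field K] {ι : Type*} [Fintype ι] [DecidableEq ι]
    (A : Matrix ι ι K) : Prop :=
  ∃ P : Matrix ι ι K, IsUnit P.det ∧ (P⁻¹ * A * P).IsDiag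

/-- The polynomial `P_α = x^α − Σ_{β∈I} a_{α,β} x^β`. -/
noncomputable def Pb {K : Type*} [Field K] {n : ℕ} (I : Finset (Fin n → ℕ))
    (a : (Fin n → ℕ) → (Fin n → ℕ) → K) (α : Fin n → ℕ) : MvPolynomial (Fin n) K :=
  MvPolynomial.monomial (Finsupp.equivFunOnFinite.symm α) 1 -
    ∑ β ∈ I, MvPolynomial.C (a α β) * MvPolynomial.monomial (Finsupp.equivFunOnFinite.symm β) 1

/-- The ideal generated by the polynomials `P_α`, `α ∈ J`. -/
noncomputable def PIdeal {K : Type*} [Field K] {n : ℕ} (I : Finset (Fin n → ℕ))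
    (a : (Fin n → ℕ) → (Fin n → ℕ) → K) : Ideal (MvPolynomial (Fin n) K) :=
  Ideal.span {p | ∃ α : Fin n → ℕ, InBorder I α ∧ p = Pb I a α}

/-!
Poisedness makes every monomial `x^α` uniquely interpolable on `X` by monomials of degree
`≤ m`; these interpolation coefficients are the `a_{α,β}`. With them, the monomial vector
`v(x) = (x^β)_{β ∈ I}` of each `x ∈ X` is an eigenvector of `A_i` with eigenvalue `x_i`, and
poisedness says exactly that the `#I` vectors `v(x)`, `x ∈ X`, form a basis. So all `A_i` are
diagonalized by the same invertible matrix, hence are diagonalizable and commute.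
-/

section Linear

variable {K ι : Type*} [Field K] [Fintype ι] [DecidableEq ι]

theorem diagonalizable_of_mul_eq_mul_diagonal {A P : Matrix ι ι K} {d : ι → K}
    (hP : IsUnit P.det) (h : A * P = P * diagonal d) : Diagonalizable A :=
  ⟨P, hP, by rw [Matrix.mul_assoc, h, nonsing_inv_mul_cancel_left _ _ hP]; exact isDiag_diagonal d⟩

theorem mul_comm_of_mul_eq_mul_diagonal {A B P : Matrix ι ι K} {d d' : ι → K}
    (hP : IsUnit P.det) (hA : A * P = P * diagonal d) (hB : B * P = P * diagonal d') :
    A * B = B * A := by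
  rw [← ((isUnit_iff_isUnit_det P).2 hP).mul_left_inj]
  calc A * B * P = P * (diagonal d * diagonal d') := by
        rw [Matrix.mul_assoc, hB, ← Matrix.mul_assoc, hA, Matrix.mul_assoc]
    _ = P * (diagonal d' * diagonal d) := by simp only [diagonal_mul_diagonal, mul_comm]
    _ = B * A * P := by
        rw [Matrix.mul_assoc B A P, hA, ← Matrix.mul_assoc B, hB, Matrix.mul_assoc]

end Linear

section MultiIndex

variable {n m : ℕ}

theorem mem_Idx_iff {α : Fin n → ℕ} : α ∈ Idx n m ↔ mdeg α ≤ m := by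
  refine ⟨fun h => (mem_filter.1 h).2, fun h => mem_filter.2 ⟨?_, h⟩⟩
  refine Fintype.mem_piFinset.2 fun i => mem_range.2 (Nat.lt_succ_of_le (le_trans ?_ h))
  exact single_le_sum (f := α) (fun j _ => Nat.zero_le _) (mem_univ i)

theorem mdeg_add_single (β : Fin n → ℕ) (i : Fin n) :
    mdeg (β + Pi.single i 1) = mdeg β + 1 := by
  simp [mdeg, sum_add_distrib, Pi.single_apply]

theorem mdeg_eq_of_inBorder_Idx {α : Fin n → ℕ} (h : InBorder (Idx n m) α) :
    mdeg α = m + 1 := by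
  obtain ⟨hα, β, hβ, i, rfl⟩ := h
  rw [mem_Idx_iff, mdeg_add_single] at *
  omega

end MultiIndex

section Interpolation

variable {K : Type*} [Field K] {n : ℕ}

theorem prod_pow_add_single (x : Fin n → K) (β : Fin n → ℕ) (i : Fin n) :
    ∏ j, x j ^ (β + Pi.single i 1 : Fin n → ℕ) j = x i * ∏ j, x j ^ β j := by
  rw [mul_comm]
  simp only [Pi.add_apply, pow_add, prod_mul_distrib]
  congr 1
  rw [Fintype.prod_eq_single i fun j hj => by simp [hj]]
  simp

theorem IsSol.isSolB {m : ℕ} {a : (Fin n → ℕ) → (Fin n → ℕ) → K} {x : Fin n → K}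
    (h : IsSol m a x) : IsSolB (Idx n m) a x :=
  fun α hα => h α (mdeg_eq_of_inBorder_Idx hα)

theorem multMat_mulVec_monVec {I : Finset (Fin n → ℕ)} {a : (Fin n → ℕ) → (Fin n → ℕ) → K}
    {x : Fin n → K} (hx : IsSolB I a x) (i : Fin n) :
    multMat I a i *ᵥ monVec I x = x i • monVec I x := by
  ext β
  simp only [mulVec, dotProduct, multMat, monVec, Pi.smul_apply, smul_eq_mul]
  rw [← prod_pow_add_single]
  by_cases hβi : (β : Fin n → ℕ) + Pi.single i 1 ∈ I
  · simp only [if_pos hβi]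
    rw [Fintype.sum_eq_single ⟨_, hβi⟩ fun γ hγ => by
      rw [if_neg fun h => hγ (Subtype.ext h), zero_mul]]
    simp
  · simp only [if_neg hβi]
    rw [hx _ ⟨hβi, β, β.2, i, rfl⟩]
    exact sum_coe_sort I fun γ => a _ γ * ∏ j, x j ^ γ j

def monMat (I : Finset (Fin n → ℕ)) (p : ↥I → Fin n → K) : Matrix ↥I ↥I K :=
  of fun β γ => monVec I (p γ) β

theorem multMat_mul_monMat {I : Finset (Fin n → ℕ)} {a : (Fin n → ℕ) → (Fin n → ℕ) → K}
    {p : ↥I → Fin n → K} (hp : ∀ γ, IsSolB I a (p γ)) (i : Fin n) :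
    multMat I a i * monMat I p = monMat I p * diagonal fun γ => p γ i := by
  ext β γ
  rw [mul_diagonal, mul_apply, mul_comm]
  exact congrFun (multMat_mulVec_monVec (hp γ) i) β

def IsPoised (I : Finset (Fin n → ℕ)) (X : Finset (Fin n → K)) : Prop :=
  ∀ f : ↥X → K, ∃! c : ↥I → K, ∀ x : ↥X, c ⬝ᵥ monVec I x = f x

variable {I : Finset (Fin n → ℕ)} {X : Finset (Fin n → K)}

theorem IsPoised.exists_interpolant (h : IsPoised I X) (f : (Fin n → K) → K) :
    ∃ b : (Fin n → ℕ) → K, ∀ x ∈ X, ∑ β ∈ I, b β * ∏ i, x i ^ β i = f x := by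
  classical
  obtain ⟨c, hc, -⟩ := h fun x => f x
  refine ⟨fun β => if hβ : β ∈ I then c ⟨β, hβ⟩ else 0, fun x hx => ?_⟩
  rw [← sum_coe_sort, ← hc ⟨x, hx⟩]
  exact sum_congr rfl fun β _ => by simp [monVec]

theorem IsPoised.eqOn_of_interpolant (h : IsPoised I X) {f : (Fin n → K) → K}
    {b b' : (Fin n → ℕ) → K} (hb : ∀ x ∈ X, ∑ β ∈ I, b β * ∏ i, x i ^ β i = f x)
    (hb' : ∀ x ∈ X, ∑ β ∈ I, b' β * ∏ i, x i ^ β i = f x) : Set.EqOn b b' I := by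
  intro β hβ
  have hrestrict : ∀ c : (Fin n → ℕ) → K, (∀ x ∈ X, ∑ β ∈ I, c β * ∏ i, x i ^ β i = f x) →
      ∀ x : ↥X, (fun γ : ↥I => c γ) ⬝ᵥ monVec I x = f x :=
    fun c hc x => (sum_coe_sort I fun γ => c γ * ∏ i, (x : Fin n → K) i ^ γ i).trans (hc x x.2)
  exact congrFun ((h fun x => f x).unique (hrestrict b hb) (hrestrict b' hb')) ⟨β, hβ⟩

theorem IsPoised.isUnit_det_monMat (h : IsPoised I X) (e : ↥X ≃ ↥I) :
    IsUnit (monMat I fun γ => (e.symm γ : Fin n → K)).det := by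
  rw [← det_transpose, ← isUnit_iff_isUnit_det, ← mulVec_injective_iff_isUnit]
  intro c c' hcc'
  have heval : ∀ (c : ↥I → K) (x : ↥X),
      ((monMat I fun γ => (e.symm γ : Fin n → K))ᵀ *ᵥ c) (e x) = c ⬝ᵥ monVec I x := by
    intro c x
    rw [dotProduct_comm]
    simp [mulVec, monMat, transpose_apply]
  exact (h fun x => c' ⬝ᵥ monVec I x).unique (fun x => by rw [← heval, hcc', heval])
    fun _ => rfl

end Interpolation

theorem stmt_10_general {K : Type*} [Field K] {n m : ℕ} (X : Finset (Fin n → K))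
    (hcard : X.card = (Idx n m).card)
    (hpoised : ∀ f : ↥X → K, ∃! c : ↥(Idx n m) → K,
      ∀ x : ↥X, ∑ β : ↥(Idx n m), c β * ∏ i, (x : Fin n → K) i ^ (β : Fin n → ℕ) i = f x) :
    ∃ a : (Fin n → ℕ) → (Fin n → ℕ) → K,
      (∀ x ∈ X, IsSol m a x) ∧
      (∀ a' : (Fin n → ℕ) → (Fin n → ℕ) → K, (∀ x ∈ X, IsSol m a' x) →
        ∀ α β : Fin n → ℕ, mdeg α = m + 1 → β ∈ Idx n m → a' α β = a α β) ∧
      (∀ i j, multMat (Idx n m) a i * multMat (Idx n m) a j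
          = multMat (Idx n m) a j * multMat (Idx n m) a i) ∧
      ∀ i, Diagonalizable (multMat (Idx n m) a i) := by
  have hX : IsPoised (Idx n m) X := hpoised
  choose a ha using fun α : Fin n → ℕ => hX.exists_interpolant fun x => ∏ i, x i ^ α i
  have hsol : ∀ x ∈ X, IsSol m a x := fun x hx α _ => (ha α x hx).symm
  let e : ↥X ≃ ↥(Idx n m) := Fintype.equivOfCardEq (by simpa using hcard)
  have hP := hX.isUnit_det_monMat e
  have hAP := multMat_mul_monMat (a := a) fun γ => (hsol _ (e.symm γ).2).isSolB
  refine ⟨a, hsol, fun a' ha' α β hα hβ => ?_,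
    fun i j => mul_comm_of_mul_eq_mul_diagonal hP (hAP i) (hAP j),
    fun i => diagonalizable_of_mul_eq_mul_diagonal hP (hAP i)⟩
  exact hX.eqOn_of_interpolant (fun x hx => (ha' x hx α hα).symm) (ha α) hβ

/-- If `X` is a poised set for degree-`m` interpolation, then there exist unique
coefficients `a_{α,β}` making every point of `X` a solution of the system; consequently
the associated multiplication matrices commute and are diagonalizable. -/
theorem stmt_10 {K : Type*} [Field K] [IsAlgClosed K] {n m : ℕ} (X : Finset (Fin n → K))
    (hcard : X.card = (Idx n m).card)
    (hpoised : ∀ f : ↥X → K, ∃! c : ↥(Idx n m) → K,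
      ∀ x : ↥X, ∑ β : ↥(Idx n m), c β * ∏ i, (x : Fin n → K) i ^ (β : Fin n → ℕ) i = f x) :
    ∃ a : (Fin n → ℕ) → (Fin n → ℕ) → K,
      (∀ x ∈ X, IsSol m a x) ∧
      (∀ a' : (Fin n → ℕ) → (Fin n → ℕ) → K, (∀ x ∈ X, IsSol m a' x) →
        ∀ α β : Fin n → ℕ, mdeg α = m + 1 → β ∈ Idx n m → a' α β = a α β) ∧
      (∀ i j, multMat (Idx n m) a i * multMat (Idx n m) a j
          = multMat (Idx n m) a j * multMat (Idx n m) a i) ∧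
      ∀ i, Diagonalizable (multMat (Idx n m) a i) :=
  stmt_10_general X hcard hpoised
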